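/- arXiv:1702.01634 — 2 statements merged into one kernel-verified Lean document; each statement's English description precedes it below -/
import Mathlib

section
/- Uniqueness of the QPE order among renormalised orders: let f be a continuous function from the density matrices on M_n(ℂ) to the strictly positive reals, and define the relation ρ ⊑ᶠ π iff f(π)•ρ − f(ρ)•π is positive semidefinite. Suppose that (1) the completely mixed state ⊥ₙ satisfies ⊥ₙ ⊑ᶠ ρ for every density matrix ρ; (2) for every density matrix ρ and every unit eigenvector v of ρ with eigenvalue ρ⁺, ρ ⊑ᶠ v v†; and (3) ⊑ᶠ respects the convex structure, i.e. ρ ⊑ᶠ σ implies ρ ⊑ᶠ (1−t)•ρ + t•σ and (1−t)•ρ + t•σ ⊑ᶠ σ for all t ∈ [0,1]. Then ⊑ᶠ coincides with the QPE order: for all density matrices ρ, σ, ρ ⊑ᶠ σ if and only if ρ ⊑ σ. -/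
open Matrix
open scoped ComplexOrder

/-- The largest eigenvalue of a matrix (for a positive semidefinite matrix this
equals the operator norm). -/
noncomputable def maxEig {m : Type*} [Fintype m] (A : Matrix m m ℂ) : ℝ :=
  sSup {a : ℝ | ∃ v : m → ℂ, v ≠ 0 ∧ A.mulVec v = (a : ℂ) • v}

/-- A density matrix: positive semidefinite with trace 1. -/
def IsDensity {m : Type*} [Fintype m] (ρ : Matrix m m ℂ) : Prop :=
  ρ.PosSemidef ∧ ρ.trace = 1

/-- The quantum positive evidence (QPE) order: ρ ⊑ σ iff σ⁺•ρ - ρ⁺•σ ≥ 0. -/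
def QPE {m : Type*} [Fintype m] (ρ σ : Matrix m m ℂ) : Prop :=
  (maxEig σ • ρ - maxEig ρ • σ).PosSemidef

/-- The $f$-renormalised order. -/
def RenOrd {n : ℕ} (f : Matrix (Fin n) (Fin n) ℂ → ℝ)
    (ρ σ : Matrix (Fin n) (Fin n) ℂ) : Prop :=
  (f σ • ρ - f ρ • σ).PosSemidef

section Aux17
variable {n : ℕ}


private lemma aux17_psd_add {A B : Matrix (Fin n) (Fin n) ℂ} (hA : A.PosSemidef) (hB : B.PosSemidef) :
    (A + B).PosSemidef :=
  PosSemidef.of_dotProduct_mulVec_nonneg (hA.1.add hB.1) (fun x => by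
    rw [add_mulVec, dotProduct_add]
    exact add_nonneg (hA.dotProduct_mulVec_nonneg x) (hB.dotProduct_mulVec_nonneg x))

private lemma aux17_psd_smul {A : Matrix (Fin n) (Fin n) ℂ} (hA : A.PosSemidef) {c : ℝ} (hc : 0 ≤ c) :
    (c • A).PosSemidef := by
  refine PosSemidef.of_dotProduct_mulVec_nonneg ?_ (fun x => ?_)
  · show (c • A)ᴴ = c • A
    rw [conjTranspose_smul, star_trivial, hA.1]
  · rw [smul_mulVec, dotProduct_smul, Complex.real_smul]
    exact mul_nonneg (by exact_mod_cast hc) (hA.dotProduct_mulVec_nonneg x)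

private lemma aux17_psd_eval {M : Matrix (Fin n) (Fin n) ℂ} (hM : M.PosSemidef) {v : Fin n → ℂ}
    (hv : star v ⬝ᵥ v = 1) {r : ℝ} (h : M *ᵥ v = r • v) : 0 ≤ r := by
  have h0 := hM.dotProduct_mulVec_nonneg v
  rw [h, dotProduct_smul, hv, Complex.real_smul, mul_one] at h0
  exact Complex.zero_le_real.mp h0

private lemma aux17_vecMulVec_mulVec (v w u : Fin n → ℂ) : vecMulVec v w *ᵥ u = (w ⬝ᵥ u) • v := by
  ext i
  simp only [vecMulVec_apply, mulVec, dotProduct, Pi.smul_apply, smul_eq_mul, Finset.sum_mul]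
  exact Finset.sum_congr rfl fun j _ => by ring

private lemma aux17_herm_P (v : Fin n → ℂ) : (vecMulVec v (star v)).IsHermitian := by
  show _ = _
  ext i j
  simp only [conjTranspose_apply, vecMulVec_apply, Pi.star_apply, star_mul', star_star]
  ring

private lemma aux17_psd_P (v : Fin n → ℂ) : (vecMulVec v (star v)).PosSemidef := by
  refine PosSemidef.of_dotProduct_mulVec_nonneg (aux17_herm_P v) (fun u => ?_)
  rw [aux17_vecMulVec_mulVec, dotProduct_smul, smul_eq_mul]
  have h1 : star v ⬝ᵥ u = star (star u ⬝ᵥ v) := star_dotProduct v u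
  rw [h1]
  exact star_mul_self_nonneg (star u ⬝ᵥ v)

private lemma aux17_trace_P {v : Fin n → ℂ} (hv : star v ⬝ᵥ v = 1) :
    (vecMulVec v (star v)).trace = 1 := by
  rw [← hv]
  simp only [trace, diag, vecMulVec_apply, Pi.star_apply, dotProduct]
  exact Finset.sum_congr rfl fun j _ => by ring

private lemma aux17_psd_one_sub_P {v : Fin n → ℂ} (hv : star v ⬝ᵥ v = 1) :
    ((1 : Matrix (Fin n) (Fin n) ℂ) - vecMulVec v (star v)).PosSemidef := by
  refine PosSemidef.of_dotProduct_mulVec_nonneg (Matrix.isHermitian_one.sub (aux17_herm_P v)) (fun u => ?_)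
  set z := star v ⬝ᵥ u with hz
  have h1 : star u ⬝ᵥ v = star z := by rw [hz, star_dotProduct v u, star_star]
  have key : star u ⬝ᵥ ((1 - vecMulVec v (star v)) *ᵥ u)
      = star (u - z • v) ⬝ᵥ (u - z • v) := by
    rw [sub_mulVec, one_mulVec, aux17_vecMulVec_mulVec, ← hz]
    rw [star_sub, star_smul, sub_dotProduct, dotProduct_sub, dotProduct_sub]
    simp only [dotProduct_smul, smul_dotProduct, smul_eq_mul, star_star, hv, h1, ← hz]
    ring
  rw [key]
  exact dotProduct_star_self_nonneg _

private lemma aux17_dot_star_self_real (w : Fin n → ℂ) :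
    star w ⬝ᵥ w = ((∑ i, ‖w i‖ ^ 2 : ℝ) : ℂ) := by
  push_cast
  simp only [dotProduct, Pi.star_apply]
  exact Finset.sum_congr rfl fun j _ => Complex.conj_mul' (w j)

private lemma aux17_dot_star_self_pos {w : Fin n → ℂ} (hw : w ≠ 0) :
    0 < ∑ i, ‖w i‖ ^ 2 := by
  obtain ⟨i, hi⟩ := Function.ne_iff.mp hw
  exact Finset.sum_pos' (fun j _ => sq_nonneg _)
    ⟨i, Finset.mem_univ i, by have := norm_pos_iff.mpr hi; positivity⟩

/-- normalize a nonzero vector, keeping orthogonality to v -/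
private lemma aux17_exists_unit_ortho {v : Fin n → ℂ} (hn : 2 ≤ n) (hv : star v ⬝ᵥ v = 1) :
    ∃ w : Fin n → ℂ, star w ⬝ᵥ w = 1 ∧ star v ⬝ᵥ w = 0 := by
  have hex : ∃ k : Fin n, (Pi.single k 1 : Fin n → ℂ) - (star v ⬝ᵥ Pi.single k 1) • v ≠ 0 := by
    by_contra h
    push_neg at h
    have h0 := sub_eq_zero.mp (h ⟨0, by omega⟩)
    have h1 := sub_eq_zero.mp (h ⟨1, by omega⟩)
    have ne01 : (⟨0, by omega⟩ : Fin n) ≠ ⟨1, by omega⟩ := by simp [Fin.ext_iff]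
    have e00 : (1 : ℂ) = (star v ⬝ᵥ Pi.single (⟨0, by omega⟩ : Fin n) 1) * v ⟨0, by omega⟩ := by
      have := congrFun h0 ⟨0, by omega⟩
      simpa using this
    have e01 : (0 : ℂ) = (star v ⬝ᵥ Pi.single (⟨0, by omega⟩ : Fin n) 1) * v ⟨1, by omega⟩ := by
      have := congrFun h0 ⟨1, by omega⟩
      simpa [Pi.single_eq_of_ne ne01.symm] using this
    have e11 : (1 : ℂ) = (star v ⬝ᵥ Pi.single (⟨1, by omega⟩ : Fin n) 1) * v ⟨1, by omega⟩ := by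
      have := congrFun h1 ⟨1, by omega⟩
      simpa using this
    have hc0 : (star v ⬝ᵥ Pi.single (⟨0, by omega⟩ : Fin n) 1) ≠ 0 := by
      intro h'
      rw [h'] at e00; simp at e00
    have hv1 : v ⟨1, by omega⟩ = 0 := by
      rcases mul_eq_zero.mp e01.symm with h' | h'
      · exact absurd h' hc0
      · exact h'
    rw [hv1, mul_zero] at e11
    exact one_ne_zero e11
  obtain ⟨k, hk⟩ := hex
  set w0 : Fin n → ℂ := (Pi.single k 1 : Fin n → ℂ) - (star v ⬝ᵥ Pi.single k 1) • v with hw0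
  have horth0 : star v ⬝ᵥ w0 = 0 := by
    rw [hw0, dotProduct_sub, dotProduct_smul, hv, smul_eq_mul, mul_one, sub_self]
  set q := ∑ i, ‖w0 i‖ ^ 2 with hq
  have hqpos : 0 < q := aux17_dot_star_self_pos hk
  refine ⟨((Real.sqrt q)⁻¹ : ℂ) • w0, ?_, ?_⟩
  · rw [star_smul, smul_dotProduct, dotProduct_smul, aux17_dot_star_self_real w0, ← hq]
    simp only [star_inv₀, Complex.star_def, Complex.conj_ofReal, smul_eq_mul]
    rw [← Complex.ofReal_inv, ← Complex.ofReal_mul, ← Complex.ofReal_mul,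
      ← mul_assoc, ← mul_inv, Real.mul_self_sqrt hqpos.le]
    rw [inv_mul_cancel₀ hqpos.ne']
    norm_num
  · rw [dotProduct_smul, horth0, smul_eq_mul, mul_zero]

end Aux17
section Aux17b
variable {n : ℕ}
private lemma aux17_rayleigh (hn : 0 < n) {A : Matrix (Fin n) (Fin n) ℂ} (hA : A.IsHermitian)
    (L : ℝ) (hL : ∀ i, hA.eigenvalues i ≤ L) (u : Fin n → ℂ) :
    star u ⬝ᵥ (A *ᵥ u) ≤ (L : ℂ) * (star u ⬝ᵥ u) := by
  set U : Matrix (Fin n) (Fin n) ℂ := (hA.eigenvectorUnitary : Matrix (Fin n) (Fin n) ℂ) with hUdef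
  have hU : U * star U = 1 := mem_unitaryGroup_iff.mp hA.eigenvectorUnitary.2
  set w := star U *ᵥ u with hw
  have hstarw : star w = star u ᵥ* U := by
    rw [hw, star_mulVec, star_eq_conjTranspose, conjTranspose_conjTranspose]
  have key : ∀ y, star u ⬝ᵥ (U *ᵥ y) = star w ⬝ᵥ y := by
    intro y
    rw [dotProduct_mulVec, ← hstarw]
  have huu : star u ⬝ᵥ u = star w ⬝ᵥ w := by
    rw [← key w, hw, mulVec_mulVec, hU, one_mulVec]
  have hAu : star u ⬝ᵥ (A *ᵥ u)
      = ∑ i, (hA.eigenvalues i : ℂ) * (star (w i) * w i) := by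
    conv_lhs => rw [hA.spectral_theorem, Unitary.conjStarAlgAut_apply]
    rw [← mulVec_mulVec, ← mulVec_mulVec, key]
    simp only [dotProduct, mulVec_diagonal, Function.comp_apply, Pi.star_apply, ← hUdef, ← hw]
    exact Finset.sum_congr rfl fun j _ => mul_left_comm _ _ _
  rw [hAu, huu]
  have expand : (L : ℂ) * (star w ⬝ᵥ w) = ∑ i, (L:ℂ) * (star (w i) * w i) := by
    rw [dotProduct, Finset.mul_sum]
    exact Finset.sum_congr rfl fun i _ => by simp only [Pi.star_apply]
  rw [expand, ← sub_nonneg, ← Finset.sum_sub_distrib]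
  refine Finset.sum_nonneg fun i _ => ?_
  have hterm : (L:ℂ) * (star (w i) * w i) - (hA.eigenvalues i : ℂ) * (star (w i) * w i)
      = ((L - hA.eigenvalues i : ℝ) : ℂ) * (star (w i) * w i) := by push_cast; ring
  rw [hterm]
  exact mul_nonneg (Complex.zero_le_real.mpr (by linarith [hL i])) (star_mul_self_nonneg (w i))

private lemma aux17_maxEig_spec (hn : 0 < n) {A : Matrix (Fin n) (Fin n) ℂ} (hA : A.IsHermitian) :
    ∃ v : Fin n → ℂ, star v ⬝ᵥ v = 1 ∧ A *ᵥ v = ((maxEig A : ℝ) : ℂ) • v := by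
  haveI : Nonempty (Fin n) := ⟨⟨0, hn⟩⟩
  obtain ⟨i0, -, hi0⟩ := Finset.exists_mem_eq_sup' Finset.univ_nonempty hA.eigenvalues
  set L := Finset.univ.sup' Finset.univ_nonempty hA.eigenvalues with hLdef
  have hL : ∀ i, hA.eigenvalues i ≤ L := fun i =>
    Finset.le_sup' hA.eigenvalues (Finset.mem_univ i)
  set v : Fin n → ℂ := ⇑(hA.eigenvectorBasis i0) with hvdef
  have hunit : star v ⬝ᵥ v = 1 := by
    have h1 : ‖hA.eigenvectorBasis i0‖ = 1 := hA.eigenvectorBasis.orthonormal.1 i0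
    have h2 : (inner ℂ (hA.eigenvectorBasis i0) (hA.eigenvectorBasis i0) : ℂ) = 1 := by
      rw [inner_self_eq_norm_sq_to_K, h1]; norm_num
    rw [EuclideanSpace.inner_eq_star_dotProduct, dotProduct_comm] at h2
    exact h2
  have heig : A *ᵥ v = ((L : ℝ) : ℂ) • v := by
    have := hA.mulVec_eigenvectorBasis i0
    rw [hvdef, this, ← hi0]
    ext i
    simp [Complex.real_smul]
  have hvne : v ≠ 0 := by
    intro h
    rw [h] at hunit
    simp at hunit
  have hmem : L ∈ {a : ℝ | ∃ w : Fin n → ℂ, w ≠ 0 ∧ A *ᵥ w = (a : ℂ) • w} := ⟨v, hvne, heig⟩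
  have hub : ∀ a ∈ {a : ℝ | ∃ w : Fin n → ℂ, w ≠ 0 ∧ A *ᵥ w = (a : ℂ) • w}, a ≤ L := by
    rintro a ⟨w, hwne, hw⟩
    have hq := aux17_dot_star_self_pos hwne
    have h1 : star w ⬝ᵥ (A *ᵥ w) = ((a * ∑ i, ‖w i‖^2 : ℝ) : ℂ) := by
      rw [hw, dotProduct_smul, smul_eq_mul, aux17_dot_star_self_real]
      push_cast; ring
    have h2 := aux17_rayleigh hn hA L hL w
    rw [h1, aux17_dot_star_self_real w] at h2
    have h3 : ((a * ∑ i, ‖w i‖^2 : ℝ) : ℂ) ≤ ((L * ∑ i, ‖w i‖^2 : ℝ) : ℂ) := by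
      convert h2 using 2
      push_cast; ring
    have h4 := Complex.real_le_real.mp h3
    exact le_of_mul_le_mul_right h4 hq
  have : maxEig A = L := by
    unfold maxEig
    exact csSup_eq_of_is_forall_le_of_forall_le_imp_ge ⟨L, hmem⟩ hub
      (fun b hb => hb L hmem)
  rw [this]
  exact ⟨v, hunit, heig⟩

end Aux17b
section Aux17c
variable {n : ℕ}

private lemma aux17_botDensity (hn : 0 < n) :
    IsDensity ((n : ℝ)⁻¹ • (1 : Matrix (Fin n) (Fin n) ℂ)) := by
  constructor
  · exact aux17_psd_smul Matrix.PosSemidef.one (by positivity)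
  · rw [Matrix.trace_smul, Matrix.trace_one]
    rw [Complex.real_smul]
    have h1 : (((n : ℝ)⁻¹ : ℝ) : ℂ) = ((n : ℂ))⁻¹ := by push_cast; ring
    rw [h1, Fintype.card_fin]
    exact inv_mul_cancel₀ (by exact_mod_cast hn.ne')

private lemma aux17_pure_le (hn : 2 ≤ n) (f : Matrix (Fin n) (Fin n) ℂ → ℝ)
    (hfpos : ∀ ρ, IsDensity ρ → 0 < f ρ)
    (hfcont : ContinuousOn f {ρ | IsDensity ρ})
    (hbot : ∀ ρ, IsDensity ρ →
      RenOrd f ((n : ℝ)⁻¹ • (1 : Matrix (Fin n) (Fin n) ℂ)) ρ)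
    (hconvex : ∀ ρ σ, IsDensity ρ → IsDensity σ → RenOrd f ρ σ →
      ∀ t ∈ Set.Icc (0 : ℝ) 1,
        RenOrd f ρ ((1 - t) • ρ + t • σ) ∧ RenOrd f ((1 - t) • ρ + t • σ) σ)
    {v : Fin n → ℂ} (hv : star v ⬝ᵥ v = 1) :
    f (vecMulVec v (star v)) ≤ n * f ((n : ℝ)⁻¹ • 1) := by
  have hn0 : (0:ℝ) < n := by exact_mod_cast (by omega : 0 < n)
  have hn1 : (0:ℝ) < (n:ℝ) - 1 := by
    have : (2:ℝ) ≤ n := by exact_mod_cast hn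
    linarith
  have hninv1 : (n:ℝ)⁻¹ ≤ 1 := by
    rw [inv_le_one_iff₀]; right; linarith
  have hninv0 : (0:ℝ) < (n:ℝ)⁻¹ := by positivity
  set P := vecMulVec v (star v) with hP
  set B : Matrix (Fin n) (Fin n) ℂ := (n:ℝ)⁻¹ • 1 with hB
  obtain ⟨w, hw, hvw⟩ := aux17_exists_unit_ortho hn hv
  set χ : ℝ → Matrix (Fin n) (Fin n) ℂ :=
    fun x => ((1-x)/((n:ℝ)-1)) • (1 - P) + x • P with hχ
  have hPv : P *ᵥ v = v := by rw [hP, aux17_vecMulVec_mulVec, hv, one_smul]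
  have hPw : P *ᵥ w = 0 := by rw [hP, aux17_vecMulVec_mulVec, hvw, zero_smul]
  have hχv : ∀ x : ℝ, χ x *ᵥ v = x • v := by
    intro x
    rw [hχ]
    simp only
    rw [add_mulVec, smul_mulVec, smul_mulVec, sub_mulVec, one_mulVec, hPv]
    simp
  have hχw : ∀ x : ℝ, χ x *ᵥ w = ((1-x)/((n:ℝ)-1)) • w := by
    intro x
    rw [hχ]
    simp only
    rw [add_mulVec, smul_mulVec, smul_mulVec, sub_mulVec, one_mulVec, hPw]
    simp
  have hBu : ∀ u : Fin n → ℂ, B *ᵥ u = (n:ℝ)⁻¹ • u := by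
    intro u
    rw [hB, smul_mulVec, one_mulVec]
  have hPd : IsDensity P := ⟨aux17_psd_P v, aux17_trace_P hv⟩
  have hBd : IsDensity B := aux17_botDensity (by omega)
  have hχd : ∀ x ∈ Set.Icc (0:ℝ) 1, IsDensity (χ x) := by
    intro x hx
    constructor
    · exact aux17_psd_add
        (aux17_psd_smul (aux17_psd_one_sub_P hv) (div_nonneg (by linarith [hx.2]) hn1.le))
        (aux17_psd_smul (aux17_psd_P v) hx.1)
    · rw [hχ]
      simp only
      rw [Matrix.trace_add, Matrix.trace_smul, Matrix.trace_smul, Matrix.trace_sub,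
        Matrix.trace_one, aux17_trace_P hv, Fintype.card_fin]
      rw [Complex.real_smul, Complex.real_smul, mul_one]
      have h2 : ((n:ℂ) - 1) = (((n:ℝ) - 1 : ℝ) : ℂ) := by push_cast; ring
      rw [h2, ← Complex.ofReal_mul, div_mul_cancel₀ _ hn1.ne']
      rw [← Complex.ofReal_add]
      norm_num
  have hχB : χ (n:ℝ)⁻¹ = B := by
    rw [hχ, hB]
    simp only
    have h1 : (1 - (n:ℝ)⁻¹)/((n:ℝ)-1) = (n:ℝ)⁻¹ := by
      field_simp
    rw [h1, smul_sub, sub_add_cancel]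
  have key : ∀ x ∈ Set.Ico (0:ℝ) (n:ℝ)⁻¹, f P * x < f (χ x) := by
    intro x hx
    by_contra hcon
    push_neg at hcon
    have hx1 : x < 1 := lt_of_lt_of_le hx.2 hninv1
    have hxd := hχd x ⟨hx.1, hx1.le⟩
    have hfP := hfpos P hPd
    have hfB := hfpos B hBd
    have hRO : RenOrd f (χ x) P := by
      unfold RenOrd
      have hiden : f P • χ x - f (χ x) • P
          = (f P * ((1-x)/((n:ℝ)-1))) • ((1 : Matrix (Fin n) (Fin n) ℂ) - P)
            + (f P * x - f (χ x)) • P := by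
        rw [hχ]
        simp only
        module
      rw [hiden]
      exact aux17_psd_add
        (aux17_psd_smul (aux17_psd_one_sub_P hv)
          (mul_nonneg hfP.le (div_nonneg (by linarith) hn1.le)))
        (aux17_psd_smul (aux17_psd_P v) (by linarith))
    set t := ((n:ℝ)⁻¹ - x)/(1 - x) with ht
    have ht0 : 0 ≤ t := div_nonneg (by linarith [hx.2]) (by linarith)
    have ht1 : t ≤ 1 := by
      rw [div_le_one (by linarith)]
      linarith
    have hxne : (1:ℝ) - x ≠ 0 := by linarith
    have haff : (1 - t) • χ x + t • P = χ ((1-t)*x + t) := by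
      rw [hχ]
      simp only
      match_scalars
      · ring
      · ring
    have hteval : (1-t)*x + t = (n:ℝ)⁻¹ := by
      have h4 : t * (1-x) = (n:ℝ)⁻¹ - x := div_mul_cancel₀ _ hxne
      linear_combination h4
    have hmix : (1 - t) • χ x + t • P = B := by
      rw [haff, hteval, hχB]
    have h1 := (hconvex (χ x) P hxd hPd hRO t ⟨ht0, ht1⟩).1
    rw [hmix] at h1
    have e1 : (f B • χ x - f (χ x) • B) *ᵥ v
        = (f B * x - f (χ x) * (n:ℝ)⁻¹) • v := by
      rw [sub_mulVec, smul_mulVec (f B) (χ x) v,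
        smul_mulVec (f (χ x)) B v, hχv, hBu,
        smul_smul, smul_smul, ← sub_smul]
    have i1 : 0 ≤ f B * x - f (χ x) * (n:ℝ)⁻¹ := aux17_psd_eval h1 hv e1
    have h2 := hbot (χ x) hxd
    unfold RenOrd at h2
    have e2 : (f (χ x) • B - f B • χ x) *ᵥ w
        = (f (χ x) * (n:ℝ)⁻¹ - f B * ((1-x)/((n:ℝ)-1))) • w := by
      rw [sub_mulVec, smul_mulVec (f (χ x)) B w,
        smul_mulVec (f B) (χ x) w, hχw, hBu,
        smul_smul, smul_smul, ← sub_smul]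
    have i2 : 0 ≤ f (χ x) * (n:ℝ)⁻¹ - f B * ((1-x)/((n:ℝ)-1)) := aux17_psd_eval h2 hw e2
    have hchain : f B * ((1-x)/((n:ℝ)-1)) ≤ f B * x := by linarith
    have hdle : (1-x)/((n:ℝ)-1) ≤ x := le_of_mul_le_mul_left hchain hfB
    have hd2 : 1 - x ≤ x * ((n:ℝ)-1) := (div_le_iff₀ hn1).mp hdle
    have hd3 : 1 ≤ x * n := by nlinarith
    have hd4 : (n:ℝ)⁻¹ ≤ x := by
      rw [inv_eq_one_div, div_le_iff₀ hn0]
      linarith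
    linarith [hx.2]
  have hχcont : Continuous χ := by
    rw [hχ]
    fun_prop
  have hFc : ContinuousOn (fun x => f (χ x)) (Set.Icc (0:ℝ) 1) :=
    hfcont.comp hχcont.continuousOn (fun x hx => hχd x hx)
  have hmem : (n:ℝ)⁻¹ ∈ Set.Icc (0:ℝ) 1 := ⟨hninv0.le, hninv1⟩
  haveI hneb : (nhdsWithin ((n:ℝ)⁻¹) (Set.Ioo 0 (n:ℝ)⁻¹)).NeBot :=
    right_nhdsWithin_Ioo_neBot hninv0
  have hmono : Set.Ioo (0:ℝ) (n:ℝ)⁻¹ ⊆ Set.Icc (0:ℝ) 1 := fun y hy =>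
    ⟨hy.1.le, le_trans hy.2.le hninv1⟩
  have hta : Filter.Tendsto (fun x => f (χ x))
      (nhdsWithin ((n:ℝ)⁻¹) (Set.Ioo 0 (n:ℝ)⁻¹)) (nhds (f (χ (n:ℝ)⁻¹))) :=
    (hFc ((n:ℝ)⁻¹) hmem).mono hmono
  have htb : Filter.Tendsto (fun x => f P * x)
      (nhdsWithin ((n:ℝ)⁻¹) (Set.Ioo 0 (n:ℝ)⁻¹)) (nhds (f P * (n:ℝ)⁻¹)) :=
    ((continuous_const.mul continuous_id).tendsto _).mono_left nhdsWithin_le_nhds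
  have hev : ∀ᶠ x in nhdsWithin ((n:ℝ)⁻¹) (Set.Ioo 0 (n:ℝ)⁻¹),
      f P * x ≤ f (χ x) :=
    Filter.eventually_of_mem self_mem_nhdsWithin
      (fun x hx => (key x ⟨hx.1.le, hx.2⟩).le)
  have hle : f P * (n:ℝ)⁻¹ ≤ f (χ (n:ℝ)⁻¹) :=
    le_of_tendsto_of_tendsto htb hta hev
  rw [hχB] at hle
  calc f P = (f P * (n:ℝ)⁻¹) * n := by field_simp
    _ ≤ f B * n := mul_le_mul_of_nonneg_right hle hn0.le
    _ = n * f B := mul_comm _ _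

end Aux17c

theorem stmt17 {n : ℕ} (f : Matrix (Fin n) (Fin n) ℂ → ℝ)
    (hfpos : ∀ ρ, IsDensity ρ → 0 < f ρ)
    (hfcont : ContinuousOn f {ρ | IsDensity ρ})
    (hbot : ∀ ρ, IsDensity ρ →
      RenOrd f ((n : ℝ)⁻¹ • (1 : Matrix (Fin n) (Fin n) ℂ)) ρ)
    (hpure : ∀ ρ, IsDensity ρ → ∀ v : Fin n → ℂ, star v ⬝ᵥ v = 1 →
      ρ.mulVec v = (maxEig ρ : ℂ) • v → RenOrd f ρ (vecMulVec v (star v)))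
    (hconvex : ∀ ρ σ, IsDensity ρ → IsDensity σ → RenOrd f ρ σ →
      ∀ t ∈ Set.Icc (0 : ℝ) 1,
        RenOrd f ρ ((1 - t) • ρ + t • σ) ∧ RenOrd f ((1 - t) • ρ + t • σ) σ) :
    ∀ ρ σ, IsDensity ρ → IsDensity σ → (RenOrd f ρ σ ↔ QPE ρ σ) := by
  intro ρ σ hρ hσ
  rcases Nat.lt_or_ge n 1 with hn0 | hn1
  · -- n = 0 : no density matrices
    exfalso
    have h0 : ρ.trace = 0 := by
      have : IsEmpty (Fin n) := by
        rw [Nat.lt_one_iff] at hn0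
        subst hn0
        exact Fin.isEmpty
      simp [Matrix.trace]
    rw [hρ.2] at h0
    exact one_ne_zero h0
  rcases Nat.lt_or_ge n 2 with hn2 | hn2
  · -- n = 1 : everything is the unique density matrix
    have hn : n = 1 := by omega
    subst hn
    have huniq : ∀ τ : Matrix (Fin 1) (Fin 1) ℂ, IsDensity τ → τ = Matrix.of fun _ _ => 1 := by
      intro τ hτ
      have htr : τ.trace = 1 := hτ.2
      have htr' : τ 0 0 = 1 := by
        simpa [Matrix.trace, Fin.sum_univ_one] using htr
      ext i j
      have hi : i = 0 := Subsingleton.elim _ _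
      have hj : j = 0 := Subsingleton.elim _ _
      subst hi; subst hj
      simpa using htr'
    have heq : ρ = σ := by rw [huniq ρ hρ, huniq σ hσ]
    subst heq
    constructor
    · intro _
      unfold QPE
      rw [sub_self]
      exact ⟨Matrix.isHermitian_zero, by simp⟩
    · intro _
      unfold RenOrd
      rw [sub_self]
      exact ⟨Matrix.isHermitian_zero, by simp⟩
  -- main case : n ≥ 2
  have hnpos : (0:ℝ) < n := by exact_mod_cast (by omega : 0 < n)
  set B : Matrix (Fin n) (Fin n) ℂ := (n:ℝ)⁻¹ • 1 with hB
  have hBd : IsDensity B := aux17_botDensity (by omega)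
  have hfB : 0 < f B := hfpos B hBd
  set c : ℝ := n * f B with hc
  have hcpos : 0 < c := by positivity
  have hBu : ∀ u : Fin n → ℂ, B *ᵥ u = (n:ℝ)⁻¹ • u := by
    intro u
    rw [hB, smul_mulVec, one_mulVec]
  have key : ∀ τ, IsDensity τ → f τ = c * maxEig τ := by
    intro τ hτ
    obtain ⟨v, hv, heig⟩ := aux17_maxEig_spec (by omega : 0 < n) hτ.1.1
    have heig' : τ *ᵥ v = (maxEig τ : ℝ) • v := by
      rw [heig]
      ext i
      simp [Complex.real_smul]
    set P := vecMulVec v (star v) with hP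
    have hPd : IsDensity P := ⟨aux17_psd_P v, aux17_trace_P hv⟩
    have hPv : P *ᵥ v = v := by rw [hP, aux17_vecMulVec_mulVec, hv, one_smul]
    have hfτ := hfpos τ hτ
    have hfP := hfpos P hPd
    -- lower bound from hbot
    have h1 := hbot τ hτ
    unfold RenOrd at h1
    have e1 : (f τ • B - f B • τ) *ᵥ v
        = (f τ * (n:ℝ)⁻¹ - f B * maxEig τ) • v := by
      rw [sub_mulVec, smul_mulVec (f τ) B v, smul_mulVec (f B) τ v,
        hBu, heig', smul_smul, smul_smul, ← sub_smul]
    have i1 : 0 ≤ f τ * (n:ℝ)⁻¹ - f B * maxEig τ := aux17_psd_eval h1 hv e1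
    -- upper bound from hpure
    have h2 := hpure τ hτ v hv heig
    unfold RenOrd at h2
    rw [← hP] at h2
    have e2 : (f P • τ - f τ • P) *ᵥ v = (f P * maxEig τ - f τ) • v := by
      rw [sub_mulVec, smul_mulVec (f P) τ v, smul_mulVec (f τ) P v,
        heig', hPv, smul_smul, ← sub_smul]
    have i2 : 0 ≤ f P * maxEig τ - f τ := aux17_psd_eval h2 hv e2
    -- pure states are bounded by n * f B
    have i3 : f P ≤ n * f B :=
      aux17_pure_le hn2 f hfpos hfcont hbot hconvex hv
    have hmpos : 0 < maxEig τ := by nlinarith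
    have hup : f τ ≤ c * maxEig τ := by nlinarith
    have hlo : c * maxEig τ ≤ f τ := by
      have hninv : (n:ℝ)⁻¹ * n = 1 := inv_mul_cancel₀ hnpos.ne'
      nlinarith [mul_nonneg i1 hnpos.le]
    linarith
  have hiden : f σ • ρ - f ρ • σ = c • (maxEig σ • ρ - maxEig ρ • σ) := by
    rw [key ρ hρ, key σ hσ, smul_sub, smul_smul, smul_smul]
  constructor
  · intro hR
    unfold RenOrd at hR
    rw [hiden] at hR
    have := aux17_psd_smul hR (inv_nonneg.mpr hcpos.le)
    rw [inv_smul_smul₀ hcpos.ne'] at this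
    exact this
  · intro hQ
    unfold RenOrd
    rw [hiden]
    exact aux17_psd_smul hQ hcpos.le
end

section
/- Let ρ and σ be density matrices on M_n(ℂ) with ker ρ ⊆ ker σ, and write d(σ,ρ) = inf { λ ∈ ℝ : λ•ρ − σ is positive semidefinite }. Then d(σ,ρ) ≥ σ⁺ / ρ⁺, and equality d(σ,ρ) = σ⁺ / ρ⁺ holds if and only if ρ ⊑ σ in the QPE order. (Equivalently, D_∞(σ‖ρ) ≥ H_∞(ρ) − H_∞(σ) = log(σ⁺/ρ⁺) with equality iff ρ ⊑ σ.) -/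
open Matrix
open scoped ComplexOrder

/-- The multiplicative quantum max-divergence $d(σ,ρ) = \inf\{λ : σ ≤ λρ\}$. -/
noncomputable def dmax {m : Type*} [Fintype m] (σ ρ : Matrix m m ℂ) : ℝ :=
  sInf {l : ℝ | (l • ρ - σ).PosSemidef}

variable {n : ℕ}


lemma dot_self_eq (v : Fin n → ℂ) :
    star v ⬝ᵥ v = ((∑ i, Complex.normSq (v i) : ℝ) : ℂ) := by
  push_cast
  simp [dotProduct, Complex.normSq_eq_conj_mul_self]

lemma quad_eq {A : Matrix (Fin n) (Fin n) ℂ} (hA : A.IsHermitian) (v : Fin n → ℂ) :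
    star v ⬝ᵥ A *ᵥ v =
      ((∑ i, hA.eigenvalues i *
        Complex.normSq ((star (hA.eigenvectorUnitary : Matrix (Fin n) (Fin n) ℂ) *ᵥ v) i) : ℝ) : ℂ) := by
  set U := (hA.eigenvectorUnitary : Matrix (Fin n) (Fin n) ℂ) with hU
  set w := star U *ᵥ v with hw
  have hAv : A *ᵥ v = U *ᵥ ((diagonal (RCLike.ofReal ∘ hA.eigenvalues) : Matrix (Fin n) (Fin n) ℂ) *ᵥ w) := by
    rw [hw, mulVec_mulVec, mulVec_mulVec]
    exact congrArg (· *ᵥ v) hA.spectral_theorem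
  rw [hAv, dotProduct_mulVec]
  have hsw : star v ᵥ* U = star w := by
    rw [hw, star_mulVec, star_eq_conjTranspose, conjTranspose_conjTranspose]
  rw [hsw]
  push_cast
  simp only [dotProduct, mulVec_diagonal, Pi.star_apply, Function.comp_apply]
  congr 1
  funext i
  rw [Complex.normSq_eq_conj_mul_self, Complex.star_def]
  simp only [RCLike.ofReal, Complex.coe_algebraMap]
  ring

lemma mulVec_star_mulVec {A : Matrix (Fin n) (Fin n) ℂ} (hA : A.IsHermitian) (u : Fin n → ℂ) :
    (hA.eigenvectorUnitary : Matrix (Fin n) (Fin n) ℂ) *ᵥ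
      (star (hA.eigenvectorUnitary : Matrix (Fin n) (Fin n) ℂ) *ᵥ u) = u := by
  rw [mulVec_mulVec, (Matrix.mem_unitaryGroup_iff).mp hA.eigenvectorUnitary.2, one_mulVec]

lemma star_mulVec_mulVec {A : Matrix (Fin n) (Fin n) ℂ} (hA : A.IsHermitian) (u : Fin n → ℂ) :
    star (hA.eigenvectorUnitary : Matrix (Fin n) (Fin n) ℂ) *ᵥ
      ((hA.eigenvectorUnitary : Matrix (Fin n) (Fin n) ℂ) *ᵥ u) = u := by
  rw [mulVec_mulVec, (Matrix.mem_unitaryGroup_iff').mp hA.eigenvectorUnitary.2, one_mulVec]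

lemma sum_normSq_star_mulVec {A : Matrix (Fin n) (Fin n) ℂ} (hA : A.IsHermitian) (v : Fin n → ℂ) :
    ∑ i, Complex.normSq ((star (hA.eigenvectorUnitary : Matrix (Fin n) (Fin n) ℂ) *ᵥ v) i)
      = ∑ i, Complex.normSq (v i) := by
  set U := (hA.eigenvectorUnitary : Matrix (Fin n) (Fin n) ℂ) with hU
  set w := star U *ᵥ v with hw
  have h1 : star w ⬝ᵥ w = star v ⬝ᵥ v := by
    have hsw : star w = star v ᵥ* U := by
      rw [hw, star_mulVec, star_eq_conjTranspose, conjTranspose_conjTranspose]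
    rw [hsw, ← dotProduct_mulVec, hw, mulVec_star_mulVec hA]
  have := (dot_self_eq w).symm.trans (h1.trans (dot_self_eq v))
  exact_mod_cast this

lemma sum_normSq_pos {v : Fin n → ℂ} (hv : v ≠ 0) : 0 < ∑ i, Complex.normSq (v i) := by
  obtain ⟨i, hi⟩ := Function.ne_iff.mp hv
  exact Finset.sum_pos' (fun j _ => Complex.normSq_nonneg _)
    ⟨i, Finset.mem_univ i, by simpa using Complex.normSq_pos.mpr hi⟩


lemma univNE (hn : 0 < n) : (Finset.univ : Finset (Fin n)).Nonempty :=
  ⟨⟨0, hn⟩, Finset.mem_univ _⟩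

lemma eig_mem {A : Matrix (Fin n) (Fin n) ℂ} (hA : A.IsHermitian) (i : Fin n) :
    hA.eigenvalues i ∈ {a : ℝ | ∃ v : Fin n → ℂ, v ≠ 0 ∧ A.mulVec v = (a : ℂ) • v} := by
  refine ⟨⇑(hA.eigenvectorBasis i), ?_, ?_⟩
  · intro h
    have := hA.eigenvectorBasis.orthonormal.ne_zero i
    apply this
    ext j
    exact congrFun h j
  · rw [hA.mulVec_eigenvectorBasis]
    funext j
    simp [Complex.real_smul]

lemma eig_bound (hn : 0 < n) {A : Matrix (Fin n) (Fin n) ℂ} (hA : A.IsHermitian) {a : ℝ}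
    (ha : a ∈ {a : ℝ | ∃ v : Fin n → ℂ, v ≠ 0 ∧ A.mulVec v = (a : ℂ) • v}) :
    a ≤ Finset.univ.sup' (univNE hn) hA.eigenvalues := by
  haveI : Nonempty (Fin n) := ⟨⟨0, hn⟩⟩
  obtain ⟨v, hv, hAv⟩ := ha
  set M := Finset.univ.sup' (univNE hn) hA.eigenvalues with hM
  have h1 : star v ⬝ᵥ A *ᵥ v = ((a * ∑ i, Complex.normSq (v i) : ℝ) : ℂ) := by
    rw [hAv]
    push_cast
    rw [dotProduct_smul, dot_self_eq]
    simp [Complex.real_smul]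
  have h2 := quad_eq hA v
  have h3 : a * ∑ i, Complex.normSq (v i)
      ≤ M * ∑ i, Complex.normSq (v i) := by
    have : (↑(a * ∑ i, Complex.normSq (v i)) : ℂ) = ↑(∑ i, hA.eigenvalues i *
        Complex.normSq ((star (hA.eigenvectorUnitary : Matrix (Fin n) (Fin n) ℂ) *ᵥ v) i)) :=
      h1.symm.trans h2
    rw [Complex.ofReal_inj.mp this]
    calc ∑ i, hA.eigenvalues i *
        Complex.normSq ((star (hA.eigenvectorUnitary : Matrix (Fin n) (Fin n) ℂ) *ᵥ v) i)
        ≤ ∑ i, M * Complex.normSq ((star (hA.eigenvectorUnitary : Matrix (Fin n) (Fin n) ℂ) *ᵥ v) i) := by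
          refine Finset.sum_le_sum fun i _ => ?_
          exact mul_le_mul_of_nonneg_right (Finset.le_sup' _ (Finset.mem_univ i))
            (Complex.normSq_nonneg _)
      _ = M * ∑ i, Complex.normSq (v i) := by
          rw [← Finset.mul_sum, sum_normSq_star_mulVec hA]
  exact le_of_mul_le_mul_right (by linarith) (sum_normSq_pos hv)

lemma maxEig_eq_sup' (hn : 0 < n) {A : Matrix (Fin n) (Fin n) ℂ} (hA : A.IsHermitian) :
    maxEig A = Finset.univ.sup' (univNE hn) hA.eigenvalues := by
  haveI : Nonempty (Fin n) := ⟨⟨0, hn⟩⟩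
  apply le_antisymm
  · exact csSup_le ⟨_, eig_mem hA ⟨0, hn⟩⟩ (fun a ha => eig_bound hn hA ha)
  · obtain ⟨i, _, hi⟩ := Finset.exists_mem_eq_sup' (univNE hn)
      hA.eigenvalues
    rw [hi]
    exact le_csSup ⟨_, fun a ha => eig_bound hn hA ha⟩ (eig_mem hA i)

lemma eigenvalues_le_maxEig (hn : 0 < n) {A : Matrix (Fin n) (Fin n) ℂ} (hA : A.IsHermitian)
    (i : Fin n) : hA.eigenvalues i ≤ maxEig A := by
  rw [maxEig_eq_sup' hn hA]
  exact Finset.le_sup' _ (Finset.mem_univ i)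

lemma exists_maxEig_vec (hn : 0 < n) {A : Matrix (Fin n) (Fin n) ℂ} (hA : A.IsHermitian) :
    ∃ v : Fin n → ℂ, v ≠ 0 ∧ A.mulVec v = (maxEig A : ℂ) • v := by
  obtain ⟨i, _, hi⟩ := Finset.exists_mem_eq_sup' (univNE hn)
    hA.eigenvalues
  have := eig_mem hA i
  rw [maxEig_eq_sup' hn hA, hi]
  exact this

lemma quad_le_maxEig (hn : 0 < n) {A : Matrix (Fin n) (Fin n) ℂ} (hA : A.IsHermitian)
    (v : Fin n → ℂ) :
    star v ⬝ᵥ A *ᵥ v ≤ ((maxEig A * ∑ i, Complex.normSq (v i) : ℝ) : ℂ) := by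
  rw [quad_eq hA v, Complex.real_le_real]
  calc ∑ i, hA.eigenvalues i *
      Complex.normSq ((star (hA.eigenvectorUnitary : Matrix (Fin n) (Fin n) ℂ) *ᵥ v) i)
      ≤ ∑ i, maxEig A * Complex.normSq ((star (hA.eigenvectorUnitary : Matrix (Fin n) (Fin n) ℂ) *ᵥ v) i) :=
        Finset.sum_le_sum fun i _ => mul_le_mul_of_nonneg_right
          (eigenvalues_le_maxEig hn hA i) (Complex.normSq_nonneg _)
    _ = _ := by rw [← Finset.mul_sum, sum_normSq_star_mulVec hA]

lemma trace_eq_sum_eig {A : Matrix (Fin n) (Fin n) ℂ} (hA : A.IsHermitian) :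
    A.trace = ((∑ i, hA.eigenvalues i : ℝ) : ℂ) := by
  conv_lhs => rw [hA.spectral_theorem]
  rw [Unitary.conjStarAlgAut_apply, Matrix.trace_mul_cycle,
    (Matrix.mem_unitaryGroup_iff').mp hA.eigenvectorUnitary.2, Matrix.one_mul]
  push_cast
  simp [Matrix.trace, Matrix.diag]


/-! new lemmas -/

lemma herm_quad_real {A : Matrix (Fin n) (Fin n) ℂ} (hA : A.IsHermitian) (v : Fin n → ℂ) :
    star v ⬝ᵥ A *ᵥ v = (((star v ⬝ᵥ A *ᵥ v).re : ℝ) : ℂ) := by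
  rw [quad_eq hA v]
  simp

lemma herm_comb (l : ℝ) {ρ σ : Matrix (Fin n) (Fin n) ℂ} (hρ : ρ.IsHermitian)
    (hσ : σ.IsHermitian) : (l • ρ - σ).IsHermitian := by
  unfold IsHermitian
  rw [conjTranspose_sub, conjTranspose_smul, star_trivial, hρ.eq, hσ.eq]

lemma psd_iff_re {B : Matrix (Fin n) (Fin n) ℂ} (hB : B.IsHermitian) :
    B.PosSemidef ↔ ∀ v : Fin n → ℂ, 0 ≤ (star v ⬝ᵥ B *ᵥ v).re := by
  constructor
  · intro h v
    have h2 := h.dotProduct_mulVec_nonneg v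
    rw [herm_quad_real hB v] at h2
    exact Complex.zero_le_real.mp h2
  · intro h
    exact PosSemidef.of_dotProduct_mulVec_nonneg hB fun v => by rw [herm_quad_real hB v]; exact Complex.zero_le_real.mpr (h v)

lemma psd_re {B : Matrix (Fin n) (Fin n) ℂ} (hB : B.PosSemidef) (v : Fin n → ℂ) :
    0 ≤ (star v ⬝ᵥ B *ᵥ v).re := by
  have := (Complex.le_def.mp (hB.dotProduct_mulVec_nonneg v)).1
  simpa using this

lemma quad_expand (l : ℝ) (ρ σ : Matrix (Fin n) (Fin n) ℂ) (v : Fin n → ℂ) :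
    (star v ⬝ᵥ (l • ρ - σ) *ᵥ v).re
      = l * (star v ⬝ᵥ ρ *ᵥ v).re - (star v ⬝ᵥ σ *ᵥ v).re := by
  rw [sub_mulVec, dotProduct_sub]
  rw [smul_mulVec]
  have h2 : star v ⬝ᵥ (l • (ρ *ᵥ v)) = (l : ℂ) * (star v ⬝ᵥ (ρ *ᵥ v)) := by
    simp only [dotProduct, Pi.smul_apply, Complex.real_smul, Finset.mul_sum]
    exact Finset.sum_congr rfl fun x _ => by ring
  rw [Complex.sub_re, h2]
  simp [Complex.mul_re]

lemma psd_smul {B : Matrix (Fin n) (Fin n) ℂ} (hB : B.PosSemidef) {c : ℝ} (hc : 0 ≤ c) :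
    (c • B).PosSemidef := by
  have hh : (c • B).IsHermitian := by
    have := herm_comb c hB.1 (Matrix.isHermitian_zero)
    simpa using this
  refine (psd_iff_re hh).mpr fun v => ?_
  have h1 : (star v ⬝ᵥ (c • B) *ᵥ v).re = c * (star v ⬝ᵥ B *ᵥ v).re - (star v ⬝ᵥ (0 : Matrix (Fin n) (Fin n) ℂ) *ᵥ v).re := by
    have := quad_expand c B 0 v
    simpa using this
  rw [h1]
  simp only [zero_mulVec, dotProduct_zero, Complex.zero_re, sub_zero]
  exact mul_nonneg hc (psd_re hB v)

lemma density_npos {ρ : Matrix (Fin n) (Fin n) ℂ} (hρ : IsDensity ρ) : 0 < n := by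
  rcases Nat.eq_zero_or_pos n with h | h
  · exfalso
    have : ρ.trace = 0 := by
      subst h
      simp [Matrix.trace]
    have h2 := hρ.2
    rw [this] at h2
    exact zero_ne_one h2
  · exact h

lemma exists_pos_eig {ρ : Matrix (Fin n) (Fin n) ℂ} (hρ : IsDensity ρ) :
    ∃ i, 0 < hρ.1.1.eigenvalues i := by
  have hn := density_npos hρ
  by_contra h
  push_neg at h
  have hsum : (∑ i, hρ.1.1.eigenvalues i) = 1 := by
    have := (trace_eq_sum_eig hρ.1.1).symm.trans hρ.2
    exact_mod_cast this
  have : (∑ i, hρ.1.1.eigenvalues i) ≤ 0 :=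
    Finset.sum_nonpos fun i _ => h i
  linarith

lemma maxEig_pos {ρ : Matrix (Fin n) (Fin n) ℂ} (hρ : IsDensity ρ) : 0 < maxEig ρ := by
  obtain ⟨i, hi⟩ := exists_pos_eig hρ
  exact lt_of_lt_of_le hi (eigenvalues_le_maxEig (density_npos hρ) hρ.1.1 i)

lemma key1 {ρ σ : Matrix (Fin n) (Fin n) ℂ} (hρ : IsDensity ρ) (hσ : IsDensity σ)
    {l : ℝ} (hl : (l • ρ - σ).PosSemidef) : maxEig σ / maxEig ρ ≤ l := by
  have hn := density_npos hρ
  have hMρ := maxEig_pos hρ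
  have hMσ := maxEig_pos hσ
  obtain ⟨v, hv, hvσ⟩ := exists_maxEig_vec hn hσ.1.1
  set t := ∑ i, Complex.normSq (v i) with ht'
  have ht : 0 < t := sum_normSq_pos hv
  have hb : (star v ⬝ᵥ σ *ᵥ v).re = maxEig σ * t := by
    have h1 : star v ⬝ᵥ σ *ᵥ v = (maxEig σ : ℂ) * ((t : ℝ) : ℂ) := by
      rw [hvσ, dotProduct_smul, dot_self_eq, smul_eq_mul]
    rw [h1, ← Complex.ofReal_mul, Complex.ofReal_re]
  set a := (star v ⬝ᵥ ρ *ᵥ v).re with ha'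
  have ha0 : 0 ≤ a := psd_re hρ.1 v
  have haM : a ≤ maxEig ρ * t := by
    have h1 := quad_le_maxEig hn hρ.1.1 v
    rw [herm_quad_real hρ.1.1 v] at h1
    exact_mod_cast (Complex.real_le_real.mp h1)
  have hmain : 0 ≤ l * a - maxEig σ * t := by
    have := psd_re hl v
    rw [quad_expand l ρ σ v, hb] at this
    exact this
  have hla : maxEig σ * t ≤ l * a := by linarith
  have hl0 : 0 < l := by nlinarith
  have h2 : l * a ≤ l * (maxEig ρ * t) := mul_le_mul_of_nonneg_left haM hl0.le
  have h3 : maxEig σ * t ≤ (l * maxEig ρ) * t := by nlinarith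
  have h4 : maxEig σ ≤ l * maxEig ρ := le_of_mul_le_mul_right h3 ht
  rw [div_le_iff₀ hMρ]
  linarith

lemma key2 {ρ σ : Matrix (Fin n) (Fin n) ℂ} (hρ : IsDensity ρ) (hσ : IsDensity σ)
    (hker : ∀ v : Fin n → ℂ, ρ.mulVec v = 0 → σ.mulVec v = 0) :
    ∃ l : ℝ, (l • ρ - σ).PosSemidef := by
  classical
  have hn := density_npos hρ
  have hρh := hρ.1.1
  have hσh := hσ.1.1
  have hMσ := maxEig_pos hσ
  set μ := hρh.eigenvalues with hμ
  have hT : (Finset.univ.filter (fun i => 0 < μ i)).Nonempty := by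
    obtain ⟨i, hi⟩ := exists_pos_eig hρ
    exact ⟨i, Finset.mem_filter.mpr ⟨Finset.mem_univ _, hi⟩⟩
  set m := (Finset.univ.filter (fun i => 0 < μ i)).inf' hT μ with hm'
  have hm : 0 < m := (Finset.lt_inf'_iff hT).mpr fun i hi => (Finset.mem_filter.mp hi).2
  refine ⟨maxEig σ / m, (psd_iff_re (herm_comb _ hρh hσh)).mpr fun v => ?_⟩
  set U := (hρh.eigenvectorUnitary : Matrix (Fin n) (Fin n) ℂ) with hU
  set w := star U *ᵥ v with hw
  set w₁ : Fin n → ℂ := fun i => if 0 < μ i then w i else 0 with hw₁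
  set v₁ := U *ᵥ w₁ with hv₁
  set v₀ := v - v₁ with hv₀
  have hρvec : ∀ u : Fin n → ℂ,
      ρ *ᵥ u = U *ᵥ ((diagonal (RCLike.ofReal ∘ μ) : Matrix (Fin n) (Fin n) ℂ) *ᵥ (star U *ᵥ u)) := by
    intro u
    rw [mulVec_mulVec, mulVec_mulVec]
    exact congrArg (· *ᵥ u) hρh.spectral_theorem
  have hDw : (diagonal (RCLike.ofReal ∘ μ) : Matrix (Fin n) (Fin n) ℂ) *ᵥ w₁
      = (diagonal (RCLike.ofReal ∘ μ) : Matrix (Fin n) (Fin n) ℂ) *ᵥ w := by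
    funext i
    simp only [mulVec_diagonal, Function.comp_apply, hw₁]
    by_cases h : 0 < μ i
    · simp [h]
    · have h0 : μ i = 0 := le_antisymm (not_lt.mp h) (hρ.1.eigenvalues_nonneg i)
      simp [h, h0]
  have hker0 : ρ *ᵥ v₀ = 0 := by
    rw [hv₀, mulVec_sub, hρvec v, hρvec v₁, hv₁, star_mulVec_mulVec hρh, hDw, ← hw, sub_self]
  have hσ0 : σ *ᵥ v₀ = 0 := hker v₀ hker0
  have hvsplit : v = v₀ + v₁ := by rw [hv₀]; abel
  have hq : star v ⬝ᵥ σ *ᵥ v = star v₁ ⬝ᵥ σ *ᵥ v₁ := by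
    conv_lhs => rw [hvsplit]
    rw [mulVec_add, hσ0, zero_add, star_add, add_dotProduct]
    have hcross : star v₀ ⬝ᵥ σ *ᵥ v₁ = 0 := by
      rw [dotProduct_mulVec]
      have h1 : star v₀ ᵥ* σ = 0 := by
        have h2 : star v₀ ᵥ* σᴴ = star (σ *ᵥ v₀) := (star_mulVec σ v₀).symm
        rw [hσh.eq] at h2
        rw [h2, hσ0]
        simp
      rw [h1, zero_dotProduct]
    rw [hcross, zero_add]
  -- now the numeric estimate
  have hb : (star v ⬝ᵥ σ *ᵥ v).re ≤ maxEig σ * ∑ i, Complex.normSq (v₁ i) := by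
    rw [hq]
    have h1 := quad_le_maxEig hn hσh v₁
    rw [herm_quad_real hσh v₁] at h1
    exact_mod_cast Complex.real_le_real.mp h1
  have hsum1 : ∑ i, Complex.normSq (v₁ i) = ∑ i, Complex.normSq (w₁ i) := by
    have := sum_normSq_star_mulVec hρh v₁
    rw [hv₁, star_mulVec_mulVec hρh] at this
    exact this.symm
  have ha : (star v ⬝ᵥ ρ *ᵥ v).re = ∑ i, μ i * Complex.normSq (w i) := by
    rw [quad_eq hρh v]
    simp [hw, hU, hμ]
  have hstep : m * ∑ i, Complex.normSq (w₁ i) ≤ ∑ i, μ i * Complex.normSq (w i) := by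
    rw [Finset.mul_sum]
    refine Finset.sum_le_sum fun i _ => ?_
    by_cases h : 0 < μ i
    · have hmle : m ≤ μ i := Finset.inf'_le μ (Finset.mem_filter.mpr ⟨Finset.mem_univ _, h⟩)
      simp only [hw₁, if_pos h]
      exact mul_le_mul_of_nonneg_right hmle (Complex.normSq_nonneg _)
    · simp only [hw₁, if_neg h]
      simp only [Complex.normSq_zero, mul_zero]
      exact mul_nonneg (hρ.1.eigenvalues_nonneg i) (Complex.normSq_nonneg _)
  rw [quad_expand, ha]
  have hs0 : 0 ≤ ∑ i, Complex.normSq (w₁ i) :=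
    Finset.sum_nonneg fun i _ => Complex.normSq_nonneg _
  have hchain : (star v ⬝ᵥ σ *ᵥ v).re ≤ (maxEig σ / m) * ∑ i, μ i * Complex.normSq (w i) := by
    calc (star v ⬝ᵥ σ *ᵥ v).re ≤ maxEig σ * ∑ i, Complex.normSq (w₁ i) := by
          rw [← hsum1]; exact hb
      _ = (maxEig σ / m) * (m * ∑ i, Complex.normSq (w₁ i)) := by
          field_simp
      _ ≤ (maxEig σ / m) * ∑ i, μ i * Complex.normSq (w i) :=
          mul_le_mul_of_nonneg_left hstep (div_nonneg hMσ.le hm.le)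
  linarith


theorem stmt19 {n : ℕ} (ρ σ : Matrix (Fin n) (Fin n) ℂ)
    (hρ : IsDensity ρ) (hσ : IsDensity σ)
    (hker : ∀ v : Fin n → ℂ, ρ.mulVec v = 0 → σ.mulVec v = 0) :
    maxEig σ / maxEig ρ ≤ dmax σ ρ ∧
    (dmax σ ρ = maxEig σ / maxEig ρ ↔ QPE ρ σ) := by
  have hρh := hρ.1.1
  have hσh := hσ.1.1
  have hMρ : 0 < maxEig ρ := maxEig_pos hρ
  have hMσ : 0 < maxEig σ := maxEig_pos hσ
  have hne : {l : ℝ | (l • ρ - σ).PosSemidef}.Nonempty := key2 hρ hσ hker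
  have hlb : ∀ l ∈ {l : ℝ | (l • ρ - σ).PosSemidef}, maxEig σ / maxEig ρ ≤ l :=
    fun l hl => key1 hρ hσ hl
  have hbdd : BddBelow {l : ℝ | (l • ρ - σ).PosSemidef} := ⟨_, hlb⟩
  have hge : maxEig σ / maxEig ρ ≤ dmax σ ρ := le_csInf hne hlb
  refine ⟨hge, ?_, ?_⟩
  · intro hd
    have hdpsd : ((dmax σ ρ) • ρ - σ).PosSemidef := by
      refine (psd_iff_re (herm_comb _ hρh hσh)).mpr fun v => ?_
      rw [quad_expand]
      set a := (star v ⬝ᵥ ρ *ᵥ v).re with ha'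
      set b := (star v ⬝ᵥ σ *ᵥ v).re with hb'
      have ha : 0 ≤ a := psd_re hρ.1 v
      have hS : ∀ l ∈ {l : ℝ | (l • ρ - σ).PosSemidef}, 0 ≤ l * a - b := by
        intro l hl
        have := psd_re hl v
        rwa [quad_expand] at this
      rcases eq_or_lt_of_le ha with haz | hapos
      · obtain ⟨l, hl⟩ := hne
        have := hS l hl
        rw [← haz] at this ⊢
        linarith
      · have hb_le : b ≤ dmax σ ρ * a := by
          refine le_of_forall_pos_le_add fun δ hδ => ?_
          obtain ⟨l, hlS, hlt⟩ := Real.lt_sInf_add_pos hne (div_pos hδ hapos)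
          have h1 := hS l hlS
          have h2 : (δ / a) * a = δ := div_mul_cancel₀ _ (ne_of_gt hapos)
          have h3 : l * a ≤ (dmax σ ρ + δ / a) * a :=
            mul_le_mul_of_nonneg_right (le_of_lt hlt) ha
          nlinarith
        linarith
    have heq : maxEig σ • ρ - maxEig ρ • σ = maxEig ρ • ((dmax σ ρ) • ρ - σ) := by
      rw [smul_sub, smul_smul, hd, mul_comm, div_mul_cancel₀ _ (ne_of_gt hMρ)]
    unfold QPE
    rw [heq]
    exact psd_smul hdpsd hMρ.le
  · intro hq
    refine le_antisymm (csInf_le hbdd ?_) hge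
    show ((maxEig σ / maxEig ρ) • ρ - σ).PosSemidef
    have heq : (maxEig σ / maxEig ρ) • ρ - σ
        = (maxEig ρ)⁻¹ • (maxEig σ • ρ - maxEig ρ • σ) := by
      rw [smul_sub, smul_smul, smul_smul, div_eq_inv_mul, inv_mul_cancel₀ (ne_of_gt hMρ),
        one_smul]
    rw [heq]
    exact psd_smul hq (inv_nonneg.mpr hMρ.le)
end
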